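/- arXiv:1608.01836 — 4 statements merged into one kernel-verified Lean document; each statement's English description precedes it below -/
import Mathlib

section
/- Let u : ℝ^k → ℝ be locally Lipschitz and η : ℝ₊ → ℝ^k locally absolutely continuous. If s ≥ 0 is a point where both t ↦ u(η(t)) and t ↦ η(t) are differentiable, then there exists p in the Clarke generalized gradient ∂^C u(η(s)) such that the derivative of t ↦ u(η(t)) at s equals ⟨p, η'(s)⟩. -/
/-!
Because `u` is Lipschitz near `η s` and `η (s + t) = η s + t • η' + o(t)`, the number `d` is also
the derivative of `u` along the straight line `t ↦ η s + t • η'`. By Rademacher's theorem and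
Fubini, almost every line parallel to `η'` meets the differentiability set of `u` in almost every
point, and the fundamental theorem of calculus on such a line close to `η s` produces
differentiability points `z → η s` with `⟪∇u z, η'⟫ ≥ d - o(1)`. These gradients are bounded by
the Lipschitz constant, so a subsequence converges to a limiting gradient `p` with
`⟪p, η'⟫ ≥ d`. The direction `-η'` gives a limiting gradient `q` with `⟪q, η'⟫ ≤ d`, and the
intermediate value theorem on the convex hull of the limiting gradients finishes the proof.
-/

open scoped RealInnerProductSpace

/-- The Clarke generalized gradient of `u` at `x`: the convex hull of all limits of
gradients `∇u (xₙ)` along sequences `xₙ → x` of differentiability points of `u`. -/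
def clarkeGradient {k : ℕ} (u : EuclideanSpace ℝ (Fin k) → ℝ)
    (x : EuclideanSpace ℝ (Fin k)) : Set (EuclideanSpace ℝ (Fin k)) :=
  convexHull ℝ {p | ∃ xs : ℕ → EuclideanSpace ℝ (Fin k),
    (∀ n, DifferentiableAt ℝ u (xs n)) ∧
    Filter.Tendsto xs Filter.atTop (nhds x) ∧
    Filter.Tendsto (fun n => gradient u (xs n)) Filter.atTop (nhds p)}

/-- `η` is locally absolutely continuous on `S`: on every compact subinterval of `S`,
for every `ε > 0` there is `δ > 0` such that any finite family of pairwise disjoint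
subintervals of total length `< δ` has total variation of `η` less than `ε`. -/
def LocallyAbsContOn {F : Type*} [NormedAddCommGroup F] (η : ℝ → F) (S : Set ℝ) : Prop :=
  ∀ a b : ℝ, a ∈ S → b ∈ S → ∀ ε > 0, ∃ δ > 0, ∀ n : ℕ, ∀ c d : Fin n → ℝ,
    (∀ j, c j ∈ Set.Icc a b ∧ d j ∈ Set.Icc a b ∧ c j ≤ d j) →
    (Pairwise fun j l => Disjoint (Set.Ioo (c j) (d j)) (Set.Ioo (c l) (d l))) →
    (∑ j, (d j - c j)) < δ → (∑ j, ‖η (d j) - η (c j)‖) < ε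

open MeasureTheory Filter Set Topology
open scoped NNReal

theorem AbsolutelyContinuousOnInterval.exists_mem_slope_le_deriv {f : ℝ → ℝ} {a b : ℝ}
    (hf : AbsolutelyContinuousOnInterval f a b) (hab : a < b) {S : Set ℝ} (hS : ∀ᵐ t, t ∈ S) :
    ∃ t ∈ S ∩ Ioc a b, (f b - f a) / (b - a) ≤ deriv f t := by
  by_contra! hlt
  have hderiv_lt : ∀ᵐ t ∂volume.restrict (Ioc a b), deriv f t < (f b - f a) / (b - a) := by
    filter_upwards [ae_restrict_mem measurableSet_Ioc, ae_restrict_of_ae hS] with t htI htS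
    exact hlt t ⟨htS, htI⟩
  have hpos : volume.restrict (Ioc a b) {t | deriv f t < (f b - f a) / (b - a)} ≠ 0 := by
    rw [measure_congr (eventuallyEq_univ.2 hderiv_lt)]
    simp [hab]
  have := intervalIntegral.integral_lt_integral_of_ae_le_of_measure_setOfPred_lt_ne_zero hab.le
    hf.intervalIntegrable_deriv intervalIntegrable_const (hderiv_lt.mono fun t ht => ht.le) hpos
  rw [hf.integral_deriv_eq_sub, intervalIntegral.integral_const, smul_eq_mul,
    mul_div_cancel₀ _ (sub_pos.2 hab).ne'] at this
  exact this.false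

theorem LipschitzWith.ae_ae_differentiableAt_add_smul {E F : Type*} [NormedAddCommGroup E]
    [NormedSpace ℝ E] [FiniteDimensional ℝ E] [MeasurableSpace E] [BorelSpace E]
    [NormedAddCommGroup F] [NormedSpace ℝ F] [FiniteDimensional ℝ F]
    (μ : Measure E) [μ.IsAddHaarMeasure] {K : ℝ≥0} {g : E → F} (hg : LipschitzWith K g)
    (v : E) : ∀ᵐ y ∂μ, ∀ᵐ t : ℝ, DifferentiableAt ℝ g (y + t • v) := by
  borelize F
  simpa using (ae_ae_add_linearMap_mem_iff (LinearMap.toSpanSingleton ℝ E v) volume μ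
    (measurableSet_of_differentiableAt ℝ g)).2 hg.ae_differentiableAt

theorem LipschitzWith.exists_differentiableAt_slope_le_fderiv {E : Type*} [NormedAddCommGroup E]
    [NormedSpace ℝ E] [FiniteDimensional ℝ E] {K : ℝ≥0} {g : E → ℝ} (hg : LipschitzWith K g)
    (x v : E) {h δ : ℝ} (hh : 0 < h) (hδ : 0 < δ) :
    ∃ z, DifferentiableAt ℝ g z ∧ dist z x < h * (δ + ‖v‖) ∧
      h⁻¹ * (g (x + h • v) - g x) ≤ fderiv ℝ g z v + 2 * K * δ := by
  borelize E
  -- The line through `x` may miss the differentiability points of `g`; a line through a nearby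
  -- `y` meets them almost everywhere, and moving to it costs at most `2 K h δ`.
  obtain ⟨y, hyx, hy⟩ := Measure.exists_mem_of_measure_ne_zero_of_ae
    (Metric.measure_ball_pos Measure.addHaar x (mul_pos hh hδ)).ne'
    (ae_restrict_of_ae (hg.ae_ae_differentiableAt_add_smul Measure.addHaar v))
  set φ : ℝ → ℝ := fun t => g (y + t • v)
  have hφ : LipschitzWith _ φ :=
    hg.comp ((LipschitzWith.const y).add (ContinuousLinearMap.toSpanSingleton ℝ v).lipschitz)
  obtain ⟨t, ⟨htS, ht0, hth⟩, hslope⟩ :=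
    (hφ.lipschitzOnWith (s := uIcc 0 h)).absolutelyContinuousOnInterval.exists_mem_slope_le_deriv
      hh (S := {t | DifferentiableAt ℝ g (y + t • v)}) hy
  have hderiv : deriv φ t = fderiv ℝ g (y + t • v) v := by
    simpa [φ, Function.comp_def] using (htS.hasFDerivAt.comp_hasDerivAt t
      (((hasDerivAt_id t).smul_const v).const_add y)).deriv
  have hdist : dist x y ≤ h * δ := (Metric.mem_ball'.1 hyx).le
  have hgx : |g (x + h • v) - g (y + h • v)| ≤ K * (h * δ) := by
    rw [← Real.dist_eq]
    refine (hg.dist_le_mul _ _).trans ?_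
    rw [dist_add_right]
    gcongr
  have hgy : |g y - g x| ≤ K * (h * δ) := by
    rw [← Real.dist_eq, dist_comm]
    exact (hg.dist_le_mul _ _).trans (by gcongr)
  refine ⟨y + t • v, htS, ?_, ?_⟩
  · calc dist (y + t • v) x ≤ dist (y + t • v) y + dist y x := dist_triangle _ _ _
      _ < h * ‖v‖ + h * δ := by
        rw [dist_self_add_left, norm_smul, Real.norm_of_nonneg ht0.le]
        exact add_lt_add_of_le_of_lt (by gcongr) hyx
      _ = h * (δ + ‖v‖) := by ring
  · have hφ_incr : g (x + h • v) - g x ≤ φ h - φ 0 + 2 * K * (h * δ) := by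
      simp only [φ, zero_smul, add_zero]
      linarith [abs_le.1 hgx, abs_le.1 hgy]
    calc h⁻¹ * (g (x + h • v) - g x) ≤ h⁻¹ * (φ h - φ 0 + 2 * K * (h * δ)) := by gcongr
      _ = (φ h - φ 0) / (h - 0) + 2 * K * δ := by rw [sub_zero]; field_simp
      _ ≤ fderiv ℝ g (y + t • v) v + 2 * K * δ := by rw [← hderiv]; gcongr

theorem LocallyLipschitz.hasLineDerivAt_of_hasDerivAt_comp {E F : Type*} [NormedAddCommGroup E]
    [NormedSpace ℝ E] [NormedAddCommGroup F] [NormedSpace ℝ F] {u : E → F}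
    (hu : LocallyLipschitz u) {η : ℝ → E} {s : ℝ} {η' : E} {d : F} (hη : HasDerivAt η η' s)
    (hd : HasDerivAt (fun t => u (η t)) d s) : HasLineDerivAt ℝ u d (η s) η' := by
  obtain ⟨K, U, hU, hlip⟩ := hu (η s)
  have hshift : Tendsto (fun t : ℝ => s + t) (𝓝 0) (𝓝 s) := by
    simpa using (continuous_const_add s).tendsto 0
  have hline : ∀ᶠ t in 𝓝 (0 : ℝ), η s + t • η' ∈ U :=
    (Continuous.tendsto (by fun_prop) 0).eventually (by simpa using hU)
  have hcurve : ∀ᶠ t in 𝓝 (0 : ℝ), η (s + t) ∈ U :=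
    (hη.continuousAt.tendsto.comp hshift).eventually hU
  have hη0 : (fun t : ℝ => η (s + t) - η s - t • η') =o[𝓝 0] fun t => t := by
    simpa [Function.comp_def] using (hasDerivAt_iff_isLittleO.1 hη).comp_tendsto hshift
  have herr : (fun t : ℝ => u (η s + t • η') - u (η (s + t))) =o[𝓝 0] fun t => t := by
    refine Asymptotics.IsBigO.trans_isLittleO (Asymptotics.IsBigO.of_bound K ?_) hη0
    filter_upwards [hline, hcurve] with t ht₁ ht₂
    rw [show η (s + t) - η s - t • η' = -(η s + t • η' - η (s + t)) by abel, norm_neg,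
      ← dist_eq_norm, ← dist_eq_norm]
    exact hlip.dist_le_mul _ ht₁ _ ht₂
  have hcorr : HasDerivAt (fun t : ℝ => u (η s + t • η') - u (η (s + t))) 0 0 :=
    hasDerivAt_iff_isLittleO.2 (by simpa using herr)
  have hsum := (HasDerivAt.comp_const_add s 0 (by simpa using hd)).add hcorr
  rw [add_zero] at hsum
  exact hsum.congr_of_eventuallyEq (Eventually.of_forall fun t => by simp)

section limitingGradients

variable {E : Type*} [NormedAddCommGroup E] [InnerProductSpace ℝ E]

-- `clarkeGradient u x` is definitionally `convexHull ℝ (limitingGradients u x)`.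
def limitingGradients [CompleteSpace E] (u : E → ℝ) (x : E) : Set E :=
  {p | ∃ xs : ℕ → E, (∀ n, DifferentiableAt ℝ u (xs n)) ∧ Tendsto xs atTop (𝓝 x) ∧
    Tendsto (fun n => gradient u (xs n)) atTop (𝓝 p)}

variable [FiniteDimensional ℝ E]

theorem exists_mem_limitingGradients_le_inner {u : E → ℝ} {x v : E} {d K : ℝ}
    (h : ∀ ε > 0, ∃ z, DifferentiableAt ℝ u z ∧ dist z x < ε ∧ ‖gradient u z‖ ≤ K ∧
      d - ε ≤ ⟪gradient u z, v⟫) :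
    ∃ p ∈ limitingGradients u x, d ≤ ⟪p, v⟫ := by
  choose z hzu hzx hzK hzv using fun n : ℕ => h (1 / (n + 1)) Nat.one_div_pos_of_nat
  obtain ⟨p, -, φ, hφ, hp⟩ := tendsto_subseq_of_bounded (Metric.isBounded_closedBall (x := 0))
    (fun n => mem_closedBall_zero_iff.2 (hzK n))
  have hε : Tendsto (fun n : ℕ => 1 / ((φ n : ℝ) + 1)) atTop (𝓝 0) :=
    tendsto_one_div_add_atTop_nhds_zero_nat.comp hφ.tendsto_atTop
  refine ⟨p, ⟨z ∘ φ, fun n => hzu _, ?_, hp⟩, ?_⟩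
  · exact tendsto_iff_dist_tendsto_zero.2
      (squeeze_zero (fun _ => dist_nonneg) (fun n => (hzx _).le) hε)
  · exact le_of_tendsto_of_tendsto (by simpa using tendsto_const_nhds.sub hε)
      (hp.inner tendsto_const_nhds) (Eventually.of_forall fun n => hzv _)

theorem LipschitzOnWith.exists_differentiableAt_slope_le_inner_gradient {u : E → ℝ} {K : ℝ≥0}
    {x v : E} {r : ℝ} (hu : LipschitzOnWith K u (Metric.ball x r)) {h δ : ℝ} (hh : 0 < h)
    (hδ : 0 < δ) (hhr : h * (δ + ‖v‖) < r) :
    ∃ z, DifferentiableAt ℝ u z ∧ dist z x < h * (δ + ‖v‖) ∧ ‖gradient u z‖ ≤ K ∧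
      h⁻¹ * (u (x + h • v) - u x) ≤ ⟪gradient u z, v⟫ + 2 * K * δ := by
  obtain ⟨g, hg, hug⟩ := hu.extend_real
  obtain ⟨z, hgz, hzx, hz⟩ := hg.exists_differentiableAt_slope_le_fderiv x v hh hδ
  have hug_z : u =ᶠ[𝓝 z] g :=
    eventually_of_mem (Metric.isOpen_ball.mem_nhds (hzx.trans hhr)) fun w hw => hug hw
  have hxv : x + h • v ∈ Metric.ball x r := by
    rw [Metric.mem_ball, dist_self_add_left, norm_smul, Real.norm_of_nonneg hh.le]
    exact lt_of_le_of_lt (by gcongr; linarith) hhr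
  refine ⟨z, hug_z.differentiableAt_iff.2 hgz, hzx, ?_, ?_⟩
  · rw [hug_z.gradient_eq, gradient, LinearIsometryEquiv.norm_map]
    exact norm_fderiv_le_of_lipschitz ℝ hg
  · rwa [hug_z.gradient_eq, inner_gradient_left, hug hxv, hug (Metric.mem_ball_self
      (dist_nonneg.trans_lt (hzx.trans hhr)))]

theorem LocallyLipschitz.exists_mem_limitingGradients_le_inner {u : E → ℝ}
    (hu : LocallyLipschitz u) {x v : E} {d : ℝ}
    (hd : Tendsto (fun t : ℝ => t⁻¹ • (u (x + t • v) - u x)) (𝓝[>] 0) (𝓝 d)) :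
    ∃ p ∈ limitingGradients u x, d ≤ ⟪p, v⟫ := by
  obtain ⟨K, U, hU, hlip⟩ := hu x
  obtain ⟨r, hr, hrU⟩ := Metric.mem_nhds_iff.1 hU
  refine _root_.exists_mem_limitingGradients_le_inner (K := K) fun ε hε => ?_
  set δ := ε / (4 * (K + 1)) with hδ
  have hKδ : 2 * K * δ ≤ ε / 2 :=
    calc 2 * K * δ = ε / 2 * (K / (K + 1)) := by rw [hδ]; field_simp; ring
      _ ≤ ε / 2 := mul_le_of_le_one_right (by positivity) ((div_le_one (by positivity)).2 (by simp))
  have hsmall : ∀ᶠ t in 𝓝[>] (0 : ℝ), d - ε / 2 < t⁻¹ • (u (x + t • v) - u x) ∧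
      t * (δ + ‖v‖) < min ε r := by
    refine (hd.eventually (lt_mem_nhds (by linarith))).and
      (Eventually.filter_mono nhdsWithin_le_nhds ?_)
    have : Tendsto (fun t : ℝ => t * (δ + ‖v‖)) (𝓝 0) (𝓝 0) := by
      simpa using (tendsto_id (x := 𝓝 (0 : ℝ))).mul_const (δ + ‖v‖)
    exact this.eventually (gt_mem_nhds (lt_min hε hr))
  obtain ⟨h, ⟨hquot, hh⟩, hh0⟩ := (hsmall.and self_mem_nhdsWithin).exists
  obtain ⟨z, huz, hzx, hzK, hz⟩ := (hlip.mono hrU).exists_differentiableAt_slope_le_inner_gradient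
    hh0 (by positivity) (hh.trans_le (min_le_right _ _))
  refine ⟨z, huz, hzx.trans (hh.trans_le (min_le_left _ _)), hzK, ?_⟩
  rw [smul_eq_mul] at hquot
  linarith

end limitingGradients

theorem stmt0_general {k : ℕ} (u : EuclideanSpace ℝ (Fin k) → ℝ)
    (η : ℝ → EuclideanSpace ℝ (Fin k))
    (hu : LocallyLipschitz u)
    (s : ℝ)
    (η' : EuclideanSpace ℝ (Fin k)) (hη' : HasDerivAt η η' s)
    (d : ℝ) (hd : HasDerivAt (fun t => u (η t)) d s) :
    ∃ p ∈ clarkeGradient u (η s), d = ⟪p, η'⟫ := by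
  have hline := hu.hasLineDerivAt_of_hasDerivAt_comp hη' hd
  obtain ⟨p, hp, hdp⟩ := hu.exists_mem_limitingGradients_le_inner
    hline.tendsto_slope_zero_right
  obtain ⟨q, hq, hdq⟩ := hu.exists_mem_limitingGradients_le_inner
    (hline.smul (-1)).tendsto_slope_zero_right
  have hqd : ⟪q, η'⟫ ≤ d := by
    rw [neg_one_smul, neg_one_smul, inner_neg_right] at hdq
    linarith
  obtain ⟨r, hr, hrd⟩ := (convex_convexHull ℝ _).isPreconnected.intermediate_value
    (subset_convexHull ℝ _ hq) (subset_convexHull ℝ _ hp)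
    (continuous_id.inner continuous_const).continuousOn ⟨hqd, hdp⟩
  exact ⟨r, hr, hrd.symm⟩

/-- if `u` is locally Lipschitz, `η` is a locally absolutely continuous curve on
`ℝ₊`, and both `t ↦ u (η t)` and `η` are differentiable at `s ≥ 0`, then the derivative of
`u ∘ η` at `s` equals `⟪p, η'(s)⟫` for some `p` in the Clarke generalized gradient of `u`
at `η s`. -/
theorem stmt0 {k : ℕ} (u : EuclideanSpace ℝ (Fin k) → ℝ)
    (η : ℝ → EuclideanSpace ℝ (Fin k))
    (hu : LocallyLipschitz u)
    (hη : LocallyAbsContOn η (Set.Ici (0 : ℝ)))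
    (s : ℝ) (hs : 0 ≤ s)
    (η' : EuclideanSpace ℝ (Fin k)) (hη' : HasDerivAt η η' s)
    (d : ℝ) (hd : HasDerivAt (fun t => u (η t)) d s) :
    ∃ p ∈ clarkeGradient u (η s), d = ⟪p, η'⟫ :=
  stmt0_general u η hu s η' hη' d hd
end

section
/- If f is a real-valued function on an interval that admits a right derivative at almost every point, then f is differentiable at almost every point. -/
/-!
Where `f` has a right derivative it grows at most linearly to the right at some fixed scale, so
these points are covered by countably many sets, each of diameter at most that scale, on which
`f` is Lipschitz. By Rademacher's theorem `f` is differentiable within such a set `S` at almost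
every point of it. At a Lebesgue density point `x` of `S`, every `y` near `x` has a point `z ∈ S`
at distance `o(|y - x|)` to its left; the one-sided bound at `z` controls `f y - f z`, and
differentiability within `S` controls `f z - f x`, so `f` is differentiable at `x`.
-/

open MeasureTheory Set Filter Topology Metric

def rightLipschitzSet (f : ℝ → ℝ) (k r : ℝ) : Set ℝ :=
  {x | ∀ y ∈ Icc x (x + r), |f y - f x| ≤ k * (y - x)}

lemma mem_Icc_floor_div_mul (x : ℝ) {r : ℝ} (hr : 0 < r) :
    x ∈ Icc (⌊x / r⌋ * r) (⌊x / r⌋ * r + r) := by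
  constructor
  · exact (le_div_iff₀ hr).1 (Int.floor_le _)
  · have := (div_lt_iff₀ hr).1 (Int.lt_floor_add_one (x / r))
    linarith

lemma eventually_exists_mem_Icc_of_tendsto_density {S : Set ℝ} {x ε : ℝ}
    (hx : Tendsto (fun ρ => volume (S ∩ closedBall x ρ) / volume (closedBall x ρ)) (𝓝[>] 0)
      (𝓝 1)) (hε : 0 < ε) (hε1 : ε ≤ 1) :
    ∀ᶠ y in 𝓝[≠] x, ∃ z ∈ S, z ∈ Icc (y - ε * |y - x|) y := by
  -- a gap of length `ε t` in `closedBall x (2 t)` caps the density ratio at `1 - ε / 4`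
  have hlt : ENNReal.ofReal (1 - ε / 4) < 1 := by
    rw [ENNReal.ofReal_lt_one]; linarith
  obtain ⟨u, hu, hdense⟩ := mem_nhdsGT_iff_exists_Ioo_subset.1 (hx.eventually (lt_mem_nhds hlt))
  filter_upwards [self_mem_nhdsWithin,
    nhdsWithin_le_nhds (ball_mem_nhds x (half_pos (mem_Ioi.1 hu)))] with y hyx hy
  by_contra! hgap
  set t := |y - x|
  have ht : 0 < t := abs_pos.2 (sub_ne_zero.2 hyx)
  rw [mem_ball, Real.dist_eq] at hy
  have hball : volume (closedBall x (2 * t)) = ENNReal.ofReal (4 * t) := by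
    rw [Real.volume_closedBall]; ring_nf
  have hgap_sub : Icc (y - ε * t) y ⊆ closedBall x (2 * t) := by
    intro z hz
    rw [mem_closedBall, Real.dist_eq, abs_le]
    have hyx_le : -t ≤ y - x ∧ y - x ≤ t := abs_le.1 le_rfl
    constructor <;> nlinarith [hz.1, hz.2, hyx_le.1, hyx_le.2]
  have hS : volume (S ∩ closedBall x (2 * t)) ≤
      ENNReal.ofReal (1 - ε / 4) * volume (closedBall x (2 * t)) :=
    calc volume (S ∩ closedBall x (2 * t))
        ≤ volume (closedBall x (2 * t) \ Icc (y - ε * t) y) :=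
          measure_mono fun z hz => ⟨hz.2, fun hz' => hgap z hz.1 hz'⟩
      _ = ENNReal.ofReal (4 * t) - ENNReal.ofReal (ε * t) := by
          rw [measure_sdiff hgap_sub measurableSet_Icc.nullMeasurableSet
            (by simp [Real.volume_Icc]), hball, Real.volume_Icc]
          ring_nf
      _ = ENNReal.ofReal (1 - ε / 4) * volume (closedBall x (2 * t)) := by
          rw [hball, ← ENNReal.ofReal_sub _ (by positivity), ← ENNReal.ofReal_mul (by linarith)]
          ring_nf
  exact (hdense ⟨by positivity, by linarith⟩).not_ge (ENNReal.div_le_of_le_mul hS)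

lemma lipschitzOnWith_rightLipschitzSet_inter_Icc (f : ℝ → ℝ) (k r a : ℝ) :
    LipschitzOnWith k.toNNReal f (rightLipschitzSet f k r ∩ Icc a (a + r)) := by
  refine LipschitzOnWith.of_dist_le_mul fun x hx y hy => ?_
  wlog hxy : x ≤ y generalizing x y
  · rw [dist_comm, dist_comm x]
    exact this y hy x hx (le_of_not_ge hxy)
  rw [Real.dist_eq, Real.dist_eq, abs_sub_comm, abs_sub_comm x, abs_of_nonneg (sub_nonneg.2 hxy),
    Real.coe_toNNReal']
  calc |f y - f x| ≤ k * (y - x) := hx.1 y ⟨hxy, by linarith [hx.2.1, hy.2.2]⟩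
    _ ≤ max k 0 * (y - x) := by gcongr; exact le_max_left _ _

lemma exists_mem_rightLipschitzSet_of_hasDerivWithinAt {f : ℝ → ℝ} {d s : ℝ}
    (hd : HasDerivWithinAt f d (Ioi s) s) :
    ∃ n : ℕ, s ∈ rightLipschitzSet f (n + 1) (n + 1)⁻¹ := by
  rw [hasDerivWithinAt_Ioi_iff_Ici, hasDerivWithinAt_iff_isLittleO] at hd
  obtain ⟨u, hsu, hu⟩ := mem_nhdsGE_iff_exists_Icc_subset.1 (hd.def one_pos)
  obtain ⟨n, hn⟩ := exists_nat_ge (max |d| (u - s)⁻¹)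
  refine ⟨n, fun y hy => ?_⟩
  have hnu : ((n : ℝ) + 1)⁻¹ ≤ u - s :=
    inv_le_of_inv_le₀ (sub_pos.2 hsu) (by linarith [le_max_right |d| (u - s)⁻¹])
  have hys : 0 ≤ y - s := sub_nonneg.2 hy.1
  have hlin : |f y - f s - (y - s) * d| ≤ y - s := by
    simpa [abs_of_nonneg hys] using hu ⟨hy.1, by linarith [hy.2]⟩
  calc |f y - f s| = |(f y - f s - (y - s) * d) + (y - s) * d| := by ring_nf
    _ ≤ |f y - f s - (y - s) * d| + |(y - s) * d| := abs_add_le _ _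
    _ ≤ (y - s) + (y - s) * |d| := by rw [abs_mul, abs_of_nonneg hys]; linarith
    _ ≤ (n + 1) * (y - s) := by nlinarith [le_max_left |d| (u - s)⁻¹]

lemma hasDerivAt_of_hasDerivWithinAt_of_tendsto_density {f : ℝ → ℝ} {S : Set ℝ} {k r c x : ℝ}
    (hS : S ⊆ rightLipschitzSet f k r) (hr : 0 < r) (hf : HasDerivWithinAt f c S x)
    (hx : Tendsto (fun ρ => volume (S ∩ closedBall x ρ) / volume (closedBall x ρ)) (𝓝[>] 0)
      (𝓝 1)) :
    HasDerivAt f c x := by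
  rw [hasDerivAt_iff_isLittleO, Asymptotics.isLittleO_iff]
  intro C hC
  set M := |k| + |c| + 2
  set ε := min 1 (C / M)
  have hM : 0 < M := by positivity
  have hε : 0 < ε := lt_min one_pos (by positivity)
  have hεM : M * ε ≤ C := by
    calc M * ε ≤ M * (C / M) := by gcongr; exact min_le_right _ _
      _ = C := by field_simp
  obtain ⟨δ, hδ, hfS⟩ : ∃ δ > 0, ∀ z, |z - x| < δ → z ∈ S →
      |f z - f x - (z - x) * c| ≤ ε * |z - x| := by
    have := (hasDerivWithinAt_iff_isLittleO.1 hf).def hε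
    simpa [eventually_nhdsWithin_iff, Metric.eventually_nhds_iff, Real.dist_eq] using this
  rw [← nhdsNE_sup_pure, eventually_sup, eventually_pure]
  refine ⟨?_, by simp⟩
  filter_upwards [eventually_exists_mem_Icc_of_tendsto_density hx hε (min_le_left _ _),
    nhdsWithin_le_nhds (ball_mem_nhds x (lt_min hr (half_pos hδ)))] with y ⟨z, hzS, hzy⟩ hy
  set t := |y - x|
  rw [mem_ball, Real.dist_eq, lt_min_iff] at hy
  have hεt : ε * t ≤ t := mul_le_of_le_one_left (abs_nonneg _) (min_le_left _ _)
  have hyz : 0 ≤ y - z ∧ y - z ≤ ε * t := ⟨by linarith [hzy.2], by linarith [hzy.1]⟩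
  have hzx : |z - x| ≤ 2 * t := by
    calc |z - x| ≤ |z - y| + |y - x| := abs_sub_le z y x
      _ ≤ 2 * t := by rw [abs_sub_comm, abs_of_nonneg hyz.1]; linarith
  have hright : |f y - f z| ≤ |k| * (ε * t) :=
    calc |f y - f z| ≤ k * (y - z) := hS hzS y ⟨hzy.2, by linarith⟩
      _ ≤ |k| * (y - z) := by gcongr; exacts [hyz.1, le_abs_self k]
      _ ≤ |k| * (ε * t) := by gcongr; exact hyz.2
  have hleft : |f z - f x - (z - x) * c| ≤ ε * (2 * t) :=
    (hfS z (by linarith) hzS).trans (by gcongr)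
  have hshift : |(z - y) * c| ≤ |c| * (ε * t) := by
    rw [abs_mul, abs_sub_comm, abs_of_nonneg hyz.1, mul_comm]; gcongr; exact hyz.2
  calc ‖f y - f x - (y - x) • c‖
      = |(f y - f z) + (f z - f x - (z - x) * c) + (z - y) * c| := by
        rw [Real.norm_eq_abs, smul_eq_mul]; ring_nf
    _ ≤ |f y - f z| + |f z - f x - (z - x) * c| + |(z - y) * c| := abs_add_three _ _ _
    _ ≤ M * ε * t := by linarith
    _ ≤ C * ‖y - x‖ := by rw [Real.norm_eq_abs]; gcongr

lemma ae_differentiableAt_of_subset_rightLipschitzSet {f : ℝ → ℝ} {S : Set ℝ} {k r : ℝ}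
    {K : NNReal} (hS : S ⊆ rightLipschitzSet f k r) (hr : 0 < r) (hf : LipschitzOnWith K f S) :
    ∀ᵐ x, x ∈ S → DifferentiableAt ℝ f x := by
  filter_upwards [hf.ae_differentiableWithinAt_of_mem_real,
    ae_imp_of_ae_restrict (Besicovitch.ae_tendsto_measure_inter_div volume S)] with x hdiff hdens hx
  exact (hasDerivAt_of_hasDerivWithinAt_of_tendsto_density hS hr (hdiff hx).hasDerivWithinAt
    (hdens hx)).differentiableAt

theorem stmt2_general (f : ℝ → ℝ) (I : Set ℝ)
    (h : ∀ᵐ s ∂(MeasureTheory.volume.restrict I),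
      ∃ d : ℝ, HasDerivWithinAt f d (Set.Ioi s) s) :
    ∀ᵐ s ∂(MeasureTheory.volume.restrict I), DifferentiableAt ℝ f s := by
  have hr (n : ℕ) : 0 < ((n : ℝ) + 1)⁻¹ := by positivity
  have hpieces : ∀ᵐ x, ∀ (n : ℕ) (j : ℤ),
      x ∈ rightLipschitzSet f (n + 1) (n + 1 : ℝ)⁻¹ ∩
        Icc (j * (n + 1 : ℝ)⁻¹) (j * (n + 1 : ℝ)⁻¹ + (n + 1 : ℝ)⁻¹) →
      DifferentiableAt ℝ f x :=
    ae_all_iff.2 fun n => ae_all_iff.2 fun j => ae_differentiableAt_of_subset_rightLipschitzSet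
      inter_subset_left (hr n) (lipschitzOnWith_rightLipschitzSet_inter_Icc f _ _ _)
  filter_upwards [h, ae_restrict_of_ae hpieces] with s ⟨d, hd⟩ hs
  obtain ⟨n, hn⟩ := exists_mem_rightLipschitzSet_of_hasDerivWithinAt hd
  exact hs n _ ⟨hn, mem_Icc_floor_div_mul s (hr n)⟩

/-- if a real-valued function `f` on an interval `I` admits a right derivative
at almost every point of `I`, then it is differentiable at almost every point of `I`.
(Corollary of the Denjoy–Young–Saks theorem.) -/
theorem stmt2 (f : ℝ → ℝ) (I : Set ℝ) (hI : I.OrdConnected)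
    (h : ∀ᵐ s ∂(MeasureTheory.volume.restrict I),
      ∃ d : ℝ, HasDerivWithinAt f d (Set.Ioi s) s) :
    ∀ᵐ s ∂(MeasureTheory.volume.restrict I), DifferentiableAt ℝ f s :=
  stmt2_general f I h
end

section
/- Under the hypotheses of the previous conditional expectation formula (g F_s-measurable, bounded on Ω_i), the map t ↦ E_i[g_{ω(t)}(ω)] is differentiable on (s,∞), right-differentiable at s, and its derivative equals −E_i[(exp(−B(t−s)) B g(ω))_{ω(s)}] for every t ≥ s (right derivative at t = s). -/
/-!
For `t ≥ s`, split `E_i[g_{X_t}]` along the fibres of `X t`. The transition identity for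
`F s`-measurable sets passes to `F s`-measurable integrands, which gives
`E_i[g_{X_t}] = ∑ j k, exp(-(t-s)B) k j * c k j` with `c k j = E_i[g_j; X_s = k]`.
This is a fixed linear combination of entries of `exp(-(t-s)B)`, whose derivative is
`-exp(-(t-s)B) B`; collecting the sum over `j` again gives the claimed expectation.
-/

open MeasureTheory

theorem Real.coe_toNNReal_sub_coe_toNNReal_neg (a : ℝ) :
    (a.toNNReal : ℝ) - ((-a).toNNReal : ℝ) = a := by
  simp only [Real.coe_toNNReal']
  exact max_zero_sub_max_neg_zero_eq_self a

theorem MeasureTheory.Measure.real_finsetSum_apply {α ι : Type*} [MeasurableSpace α]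
    (s : Finset ι) (μ : ι → Measure α) {E : Set α} (hE : ∀ i ∈ s, μ i E ≠ ⊤) :
    (∑ i ∈ s, μ i).real E = ∑ i ∈ s, (μ i).real E := by
  simp only [measureReal_def, Measure.finsetSum_apply, ENNReal.toReal_sum hE]

theorem integral_eq_sum_smul_integral_of_measureReal_eq {α ι G : Type*} {m : MeasurableSpace α}
    [Fintype ι] [NormedAddCommGroup G] [NormedSpace ℝ G]
    {ν : Measure α} [IsFiniteMeasure ν] {ρ : ι → Measure α} [∀ k, IsFiniteMeasure (ρ k)]
    {a : ι → ℝ} (h : ∀ E, MeasurableSet E → ν.real E = ∑ k, a k * (ρ k).real E)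
    {f : α → G} (hν : Integrable f ν) (hρ : ∀ k, Integrable f (ρ k)) :
    ∫ x, f x ∂ν = ∑ k, a k • ∫ x, f x ∂ρ k := by
  -- Moving the negative coefficients to the left turns the signed identity into one of measures.
  have hmeas : ν + ∑ k, (-a k).toNNReal • ρ k = ∑ k, (a k).toNNReal • ρ k := by
    refine Measure.ext fun E hE =>
      (ENNReal.toReal_eq_toReal_iff' (measure_ne_top _ _) (measure_ne_top _ _)).1 ?_
    rw [← measureReal_def, ← measureReal_def, measureReal_add_apply, h E hE,
      Measure.real_finsetSum_apply _ _ fun k _ => measure_ne_top _ _,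
      Measure.real_finsetSum_apply _ _ fun k _ => measure_ne_top _ _, ← Finset.sum_add_distrib]
    refine Finset.sum_congr rfl fun k _ => ?_
    simp only [measureReal_nnreal_smul_apply]
    linear_combination (ρ k).real E * (Real.coe_toNNReal_sub_coe_toNNReal_neg (a k)).symm
  have hint := congrArg (fun μ => ∫ x, f x ∂μ) hmeas
  simp only [integral_add_measure hν (integrable_finsetSum_measure.2 fun k _ =>
      (hρ k).smul_measure_nnreal), integral_finsetSum_measure fun k _ =>
      (hρ k).smul_measure_nnreal, integral_smul_nnreal_measure] at hint
  rw [eq_sub_of_add_eq hint, ← Finset.sum_sub_distrib]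
  refine Finset.sum_congr rfl fun k _ => ?_
  rw [NNReal.smul_def, NNReal.smul_def, ← sub_smul, Real.coe_toNNReal_sub_coe_toNNReal_neg]

theorem setIntegral_eq_sum_smul_setIntegral_of_measureReal_inter_eq {α ι G : Type*}
    [Fintype ι] [NormedAddCommGroup G] [NormedSpace ℝ G] {m m0 : MeasurableSpace α}
    (hm : m ≤ m0) {μ : @Measure α m0} [IsFiniteMeasure μ] {S : Set α} {T : ι → Set α}
    {a : ι → ℝ}
    (h : ∀ E, MeasurableSet[m] E → μ.real (E ∩ S) = ∑ k, a k * μ.real (E ∩ T k))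
    {f : α → G} (hf : StronglyMeasurable[m] f) (hfi : Integrable f μ) :
    ∫ x in S, f x ∂μ = ∑ k, a k • ∫ x in T k, f x ∂μ := by
  have htrim := integral_eq_sum_smul_integral_of_measureReal_eq
    (ν := (μ.restrict S).trim hm) (ρ := fun k => (μ.restrict (T k)).trim hm)
    (fun E hE => by
      simp only [measureReal_def, trim_measurableSet_eq hm hE, Measure.restrict_apply (hm E hE)]
      exact h E hE)
    (hfi.restrict.trim hm hf) (fun k => hfi.restrict.trim hm hf)
  simpa only [← integral_trim hm hf] using htrim

theorem integral_comp_eq_sum_setIntegral {α ι G : Type*} [MeasurableSpace α] [Fintype ι]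
    [MeasurableSpace ι] [MeasurableSingletonClass ι] [NormedAddCommGroup G] [NormedSpace ℝ G]
    {μ : Measure α} {X : α → ι} (hX : Measurable X) {h : α → ι → G}
    (hh : ∀ k, Integrable (fun x => h x k) μ) :
    ∫ x, h x (X x) ∂μ = ∑ k, ∫ x in {x | X x = k}, h x k ∂μ := by
  have hfib : ∀ k, MeasurableSet {x | X x = k} := fun k => hX (measurableSet_singleton k)
  have hsplit : (fun x => h x (X x)) = fun x => ∑ k, {y | X y = k}.indicator (h · k) x := by
    funext x
    rw [Finset.sum_eq_single_of_mem (f := fun k => {y | X y = k}.indicator (h · k) x) (X x)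
      (Finset.mem_univ _) fun k _ hk => Set.indicator_of_notMem (Ne.symm hk) _,
      Set.indicator_of_mem (s := {y | X y = X x}) rfl]
  rw [hsplit, integral_finsetSum _ fun k _ => (hh k).indicator (hfib k)]
  exact Finset.sum_congr rfl fun k _ => integral_indicator (hfib k)

theorem integral_mulVec_comp_eq_sum {α ι : Type*} [MeasurableSpace α] [Fintype ι]
    [MeasurableSpace ι] [MeasurableSingletonClass ι] {μ : Measure α} {X : α → ι}
    (hX : Measurable X) (N : Matrix ι ι ℝ) {g : α → ι → ℝ}
    (hg : ∀ j, Integrable (fun x => g x j) μ) :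
    ∫ x, (N.mulVec (g x)) (X x) ∂μ
      = ∑ k, ∑ j, N k j * ∫ x in {x | X x = k}, g x j ∂μ := by
  have hNg : ∀ k x, N.mulVec (g x) k = ∑ j, N k j * g x j := fun _ _ => rfl
  rw [integral_comp_eq_sum_setIntegral hX fun k => by
    simpa only [hNg] using integrable_finsetSum _ fun j _ => (hg j).const_mul (N k j)]
  refine Finset.sum_congr rfl fun k _ => ?_
  simp only [hNg]
  rw [integral_finsetSum _ fun j _ => ((hg j).const_mul _).restrict]
  exact Finset.sum_congr rfl fun j _ => integral_const_mul _ _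

theorem integral_comp_eq_sum_of_measureReal_inter_eq {α ι : Type*} [Fintype ι]
    [MeasurableSpace ι] [MeasurableSingletonClass ι] {m m0 : MeasurableSpace α} (hm : m ≤ m0)
    {μ : @Measure α m0} [IsFiniteMeasure μ] {Y Z : α → ι} (hY : Measurable Y)
    (M : Matrix ι ι ℝ)
    (h : ∀ E, MeasurableSet[m] E → ∀ j,
      μ.real (E ∩ {x | Y x = j}) = ∑ k, μ.real (E ∩ {x | Z x = k}) * M k j)
    {g : α → ι → ℝ} (hg : ∀ j, StronglyMeasurable[m] fun x => g x j)
    (hgi : ∀ j, Integrable (fun x => g x j) μ) :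
    ∫ x, g x (Y x) ∂μ = ∑ j, ∑ k, M k j * ∫ x in {x | Z x = k}, g x j ∂μ := by
  rw [integral_comp_eq_sum_setIntegral hY hgi]
  refine Finset.sum_congr rfl fun j _ => ?_
  exact setIntegral_eq_sum_smul_setIntegral_of_measureReal_inter_eq hm
    (fun E hE => by simpa only [mul_comm] using h E hE j) (hg j) (hgi j)

theorem Matrix.hasDerivAt_exp_neg_sub_smul_apply {n : Type*} [Fintype n] [DecidableEq n]
    (B : Matrix n n ℝ) (s t : ℝ) (k j : n) :
    HasDerivAt (fun r : ℝ => NormedSpace.exp (-((r - s) • B)) k j)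
      (-(NormedSpace.exp (-((t - s) • B)) * B) k j) t := by
  let : NormedRing (Matrix n n ℝ) := Matrix.linftyOpNormedRing
  let : NormedAlgebra ℝ (Matrix n n ℝ) := Matrix.linftyOpNormedAlgebra
  have hexp := (hasDerivAt_exp_smul_const B (-(t - s))).scomp t
    ((hasDerivAt_id' t).sub_const s).fun_neg
  simp only [Function.comp_def, neg_smul, one_smul] at hexp
  exact (Matrix.entryLinearMap ℝ ℝ k j).toContinuousLinearMap.hasFDerivAt.comp_hasDerivAt t hexp

theorem stmt7_general {m : ℕ} {Ω : Type*} [m0 : MeasurableSpace Ω]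
    (B : Matrix (Fin m) (Fin m) ℝ)
    (F : ℝ → MeasurableSpace Ω) (hFle : ∀ t, F t ≤ m0)
    (P : Fin m → Measure Ω) (hP : ∀ i, IsProbabilityMeasure (P i))
    (X : ℝ → Ω → Fin m) (hX : ∀ t, Measurable (X t))
    (s : ℝ) (i : Fin m)
    (hsupp : P i {ω | X 0 ω ≠ i} = 0)
    (hrestr : ∀ E : Set Ω, MeasurableSet[F s] E → ∀ t : ℝ, s ≤ t → ∀ j : Fin m,
      (P i (E ∩ {ω | X t ω = j})).toReal
        = ∑ k, (P i (E ∩ {ω | X s ω = k})).toReal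
            * NormedSpace.exp (-((t - s) • B)) k j)
    (g : Ω → Fin m → ℝ)
    (hg : @Measurable Ω (Fin m → ℝ) (F s) _ g)
    (hbdd : ∃ K : ℝ, ∀ ω, X 0 ω = i → ∀ j, |g ω j| ≤ K) :
    (∀ t : ℝ, s < t →
      HasDerivAt (fun r => ∫ ω, g ω (X r ω) ∂(P i))
        (-∫ ω, (NormedSpace.exp (-((t - s) • B)) * B).mulVec (g ω) (X s ω) ∂(P i)) t) ∧
    HasDerivWithinAt (fun r => ∫ ω, g ω (X r ω) ∂(P i))
      (-∫ ω, (NormedSpace.exp (-((s - s) • B)) * B).mulVec (g ω) (X s ω) ∂(P i))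
      (Set.Ici s) s := by
  obtain ⟨K, hK⟩ := hbdd
  have := hP i
  have hgj : ∀ j, StronglyMeasurable[F s] fun ω => g ω j :=
    fun j => ((measurable_pi_apply j).comp hg).stronglyMeasurable
  have hint : ∀ j, Integrable (fun ω => g ω j) (P i) := fun j =>
    Integrable.of_bound ((hgj j).mono (hFle s)).aestronglyMeasurable K
      ((ae_iff.2 hsupp).mono fun ω hω => (Real.norm_eq_abs _).trans_le (hK ω hω j))
  set c : Fin m → Fin m → ℝ := fun k j => ∫ ω in {ω | X s ω = k}, g ω j ∂(P i)
  set φ : ℝ → ℝ := fun r => ∑ j, ∑ k, NormedSpace.exp (-((r - s) • B)) k j * c k j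
  have hφ_eq : ∀ r, s ≤ r → ∫ ω, g ω (X r ω) ∂(P i) = φ r := fun r hr =>
    integral_comp_eq_sum_of_measureReal_inter_eq (hFle s) (hX r) _
      (fun E hE => hrestr E hE r hr) hgj hint
  have hφ_deriv : ∀ t, HasDerivAt φ
      (-∫ ω, (NormedSpace.exp (-((t - s) • B)) * B).mulVec (g ω) (X s ω) ∂(P i)) t := by
    intro t
    rw [integral_mulVec_comp_eq_sum (hX s) _ hint, Finset.sum_comm]
    simp only [← Finset.sum_neg_distrib, ← neg_mul]
    exact HasDerivAt.fun_sum fun j _ => HasDerivAt.fun_sum fun k _ =>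
      (Matrix.hasDerivAt_exp_neg_sub_smul_apply B s t k j).mul_const (c k j)
  refine ⟨fun t ht => ?_, ?_⟩
  · exact (hφ_deriv t).congr_of_eventuallyEq
      (eventually_gt_nhds ht |>.mono fun r hr => hφ_eq r hr.le)
  · exact (hφ_deriv s).hasDerivWithinAt.congr (fun r hr => hφ_eq r hr) (hφ_eq s le_rfl)

/-- under the hypotheses of the conditional expectation formula (the Markov chain
`X` with generator `−B` started at `i`, `g : Ω → ℝ^m` being `F s`-measurable and bounded on
`Ω_i`), the map `t ↦ E_i[g_{ω(t)}(ω)]` is differentiable on `(s,∞)`, right-differentiable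
at `s`, and its derivative at `t ≥ s` equals `−E_i[(exp(−B(t−s)) B g(ω))_{ω(s)}]`. -/
theorem stmt7 {m : ℕ} {Ω : Type*} [m0 : MeasurableSpace Ω]
    (B : Matrix (Fin m) (Fin m) ℝ)
    (hoff : ∀ i j, i ≠ j → B i j ≤ 0)
    (hrow : ∀ i, ∑ j, B i j = 0)
    (F : ℝ → MeasurableSpace Ω) (hFle : ∀ t, F t ≤ m0)
    (hFmono : ∀ s t : ℝ, s ≤ t → F s ≤ F t)
    (P : Fin m → Measure Ω) (hP : ∀ i, IsProbabilityMeasure (P i))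
    (X : ℝ → Ω → Fin m) (hX : ∀ t, Measurable (X t))
    (hadapted : ∀ t : ℝ, @Measurable Ω (Fin m) (F t) _ (X t))
    (s : ℝ) (hs : 0 ≤ s) (i : Fin m)
    (hsupp : P i {ω | X 0 ω ≠ i} = 0)
    (hrestr : ∀ E : Set Ω, MeasurableSet[F s] E → ∀ t : ℝ, s ≤ t → ∀ j : Fin m,
      (P i (E ∩ {ω | X t ω = j})).toReal
        = ∑ k, (P i (E ∩ {ω | X s ω = k})).toReal
            * NormedSpace.exp (-((t - s) • B)) k j)
    (g : Ω → Fin m → ℝ)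
    (hg : @Measurable Ω (Fin m → ℝ) (F s) _ g)
    (hbdd : ∃ K : ℝ, ∀ ω, X 0 ω = i → ∀ j, |g ω j| ≤ K) :
    (∀ t : ℝ, s < t →
      HasDerivAt (fun r => ∫ ω, g ω (X r ω) ∂(P i))
        (-∫ ω, (NormedSpace.exp (-((t - s) • B)) * B).mulVec (g ω) (X s ω) ∂(P i)) t) ∧
    HasDerivWithinAt (fun r => ∫ ω, g ω (X r ω) ∂(P i))
      (-∫ ω, (NormedSpace.exp (-((s - s) • B)) * B).mulVec (g ω) (X s ω) ∂(P i))
      (Set.Ici s) s :=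
  stmt7_general (m0 := m0) B F hFle P hP X hX s i hsupp hrestr g hg hbdd
end

section
/- Let u : ℝ₊ × ℝ^N → ℝ^m be locally Lipschitz and γ an admissible random curve. Then for every i ∈ {1,…,m}, the function t ↦ E_i[u_{ω(t)}(t, γ(t,ω))] is locally absolutely continuous on ℝ₊. -/
/-!
On a window `[0, T]` all curves stay in one ball: by non-anticipation `γ 0` is a function of
`X 0`, which takes finitely many values, and the increments are uniformly controlled by the uniform
absolute continuity. On the compact set `[0, T] × ball` the map `u` is bounded by `B` and
`L`-Lipschitz, so for `c ≤ d`
`|u_{X d}(d, γ d) - u_{X c}(c, γ c)| ≤ L ((d - c) + ‖γ d - γ c‖) + 2 B · 1{X c ≠ X d}`.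
Summed over disjoint intervals and integrated, the first term is small by the uniform absolute
continuity of the curves, and the second by the jump estimate `P(X c ≠ X d) ≤ C (d - c)`, which
follows from `P(X c = k, X d = k) = P(X c = k) exp(-(d - c) B)_kk` and the Lipschitz continuity of
`t ↦ exp(-t B)` on compact intervals.
-/

open MeasureTheory

def UnifLocAbsCont {Ω F : Type*} [NormedAddCommGroup F] (γ : ℝ → Ω → F) : Prop :=
  ∀ T > (0 : ℝ), ∀ ε > (0 : ℝ), ∃ δ > (0 : ℝ), ∀ ω : Ω, ∀ n : ℕ, ∀ c d : Fin n → ℝ,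
    (∀ j, 0 ≤ c j ∧ c j ≤ d j ∧ d j ≤ T) →
    (Pairwise fun j l => Disjoint (Set.Ioo (c j) (d j)) (Set.Ioo (c l) (d l))) →
    (∑ j, (d j - c j)) < δ → (∑ j, ‖γ (d j) ω - γ (c j) ω‖) < ε

def NonAnticipating {Ω : Type*} {m : ℕ} {F : Type*} (X : ℝ → Ω → Fin m)
    (γ : ℝ → Ω → F) : Prop :=
  ∀ t : ℝ, 0 ≤ t → ∀ ω₁ ω₂ : Ω,
    (∀ r : ℝ, 0 ≤ r → r ≤ t → X r ω₁ = X r ω₂) →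
    ∀ r : ℝ, 0 ≤ r → r ≤ t → γ r ω₁ = γ r ω₂

open NNReal Set

theorem exists_lipschitzOnWith_exp_smul {𝔸 : Type*} [NormedRing 𝔸] [NormedAlgebra ℝ 𝔸]
    [CompleteSpace 𝔸] (A : 𝔸) (T : ℝ) :
    ∃ K, LipschitzOnWith K (fun t : ℝ => NormedSpace.exp (t • A)) (Icc 0 T) := by
  have : ContDiff ℝ 1 (fun t : ℝ => NormedSpace.exp (t • A)) :=
    contDiff_iff_contDiffAt.2 fun t => (NormedSpace.exp_analytic (t • A)).contDiffAt.comp t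
      (contDiff_id.smul contDiff_const).contDiffAt
  exact this.contDiffOn.exists_lipschitzOnWith one_ne_zero (convex_Icc 0 T) isCompact_Icc

section LinftyOpNorm

attribute [local instance] Matrix.linftyOpNormedAddCommGroup Matrix.linftyOpNormedRing
  Matrix.linftyOpNormedAlgebra

theorem Matrix.norm_apply_le_linfty_opNorm {m n α : Type*} [Fintype m] [Fintype n]
    [NormedAddCommGroup α] (A : Matrix m n α) (i : m) (j : n) : ‖A i j‖ ≤ ‖A‖ := by
  rw [Matrix.linfty_opNorm_def]
  exact (Finset.single_le_sum (f := fun j => ‖A i j‖₊) (fun _ _ => zero_le)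
    (Finset.mem_univ j)).trans (Finset.le_sup (f := fun i => ∑ j, ‖A i j‖₊) (Finset.mem_univ i))

theorem exists_abs_one_sub_exp_neg_smul_apply_le {ι : Type*} [Fintype ι] [DecidableEq ι]
    (B : Matrix ι ι ℝ) (T : ℝ) :
    ∃ K : ℝ≥0, ∀ h ∈ Icc 0 T, ∀ k, |1 - NormedSpace.exp (-(h • B)) k k| ≤ K * h := by
  obtain ⟨K, hK⟩ := exists_lipschitzOnWith_exp_smul (-B) T
  refine ⟨K, fun h hh k => ?_⟩
  calc |1 - NormedSpace.exp (-(h • B)) k k|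
      ≤ ‖NormedSpace.exp ((0 : ℝ) • -B) - NormedSpace.exp (h • -B)‖ := by
        have hk := Matrix.norm_apply_le_linfty_opNorm (1 - NormedSpace.exp (-(h • B))) k k
        change ‖(1 : Matrix ι ι ℝ) k k - _‖ ≤ _ at hk
        simpa [Matrix.one_apply_eq, Real.norm_eq_abs] using hk
    _ ≤ K * dist 0 h := hK.dist_le_mul 0 ⟨le_rfl, hh.1.trans hh.2⟩ h hh
    _ = K * h := by rw [Real.dist_eq, zero_sub, abs_neg, abs_of_nonneg hh.1]

theorem exists_measureReal_ne_le_mul {ι Ω : Type*} [Fintype ι] [DecidableEq ι]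
    [MeasurableSpace ι] [MeasurableSingletonClass ι] [MeasurableSpace Ω] {μ : Measure Ω}
    [IsProbabilityMeasure μ] (B : Matrix ι ι ℝ) {X : ℝ → Ω → ι} (hX : ∀ t, Measurable (X t))
    (hstay : ∀ s t, 0 ≤ s → s ≤ t → ∀ k, μ.real {ω | X s ω = k ∧ X t ω = k}
      = μ.real {ω | X s ω = k} * NormedSpace.exp (-((t - s) • B)) k k) (T : ℝ) :
    ∃ C : ℝ≥0, ∀ s t, 0 ≤ s → s ≤ t → t ≤ T → μ.real {ω | X s ω ≠ X t ω} ≤ C * (t - s) := by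
  obtain ⟨K, hK⟩ := exists_abs_one_sub_exp_neg_smul_apply_le B T
  refine ⟨Fintype.card ι * K, fun s t hs hst htT => ?_⟩
  have hleave : ∀ k, μ.real {ω | X s ω = k} - μ.real {ω | X s ω = k ∧ X t ω = k}
      ≤ K * (t - s) := by
    intro k
    rw [hstay s t hs hst k]
    calc μ.real {ω | X s ω = k} - μ.real {ω | X s ω = k} * NormedSpace.exp (-((t - s) • B)) k k
        = μ.real {ω | X s ω = k} * (1 - NormedSpace.exp (-((t - s) • B)) k k) := by ring
      _ ≤ 1 * |1 - NormedSpace.exp (-((t - s) • B)) k k| :=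
          (mul_le_mul_of_nonneg_left (le_abs_self _) measureReal_nonneg).trans
            (mul_le_mul_of_nonneg_right measureReal_le_one (abs_nonneg _))
      _ ≤ K * (t - s) := by
          rw [one_mul]
          exact hK (t - s) ⟨sub_nonneg.2 hst, by linarith⟩ k
  have hcover : {ω | X s ω ≠ X t ω}
      ⊆ ⋃ k, {ω | X s ω = k} \ {ω | X s ω = k ∧ X t ω = k} :=
    fun ω hω => mem_iUnion.2 ⟨X s ω, rfl, fun h => hω h.2.symm⟩
  calc μ.real {ω | X s ω ≠ X t ω}
      ≤ ∑ k, μ.real ({ω | X s ω = k} \ {ω | X s ω = k ∧ X t ω = k}) :=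
        (measureReal_mono hcover).trans (measureReal_iUnion_fintype_le _)
    _ = ∑ k, (μ.real {ω | X s ω = k} - μ.real {ω | X s ω = k ∧ X t ω = k}) := by
        refine Finset.sum_congr rfl fun k _ => measureReal_sdiff (fun ω h => h.1) ?_
        exact (hX s (measurableSet_singleton k)).inter (hX t (measurableSet_singleton k))
    _ ≤ ∑ _k : ι, K * (t - s) := Finset.sum_le_sum fun k _ => hleave k
    _ = Fintype.card ι * K * (t - s) := by simp [mul_assoc]

end LinftyOpNorm

namespace UnifLocAbsCont

variable {Ω F : Type*} [NormedAddCommGroup F] {γ : ℝ → Ω → F}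

theorem exists_norm_sub_lt (hγ : UnifLocAbsCont γ) {T ε : ℝ} (hT : 0 < T) (hε : 0 < ε) :
    ∃ δ > 0, ∀ ω s t, 0 ≤ s → s ≤ t → t ≤ T → t - s < δ → ‖γ t ω - γ s ω‖ < ε := by
  obtain ⟨δ, hδ, h⟩ := hγ T hT ε hε
  refine ⟨δ, hδ, fun ω s t hs hst htT hlt => ?_⟩
  simpa using h ω 1 ![s] ![t] (fun j => by fin_cases j; exact ⟨hs, hst, htT⟩)
    (fun j l hjl => (hjl (Subsingleton.elim j l)).elim) (by simpa using hlt)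

theorem exists_norm_sub_start_le (hγ : UnifLocAbsCont γ) (T : ℝ) :
    ∃ M, ∀ ω, ∀ t ∈ Icc 0 T, ‖γ t ω - γ 0 ω‖ ≤ M := by
  obtain ⟨δ, hδ, h⟩ := hγ.exists_norm_sub_lt (lt_max_of_lt_right one_pos : 0 < max T 1) one_pos
  set n : ℕ := ⌈T / δ⌉₊ + 1
  have hn : 0 < (n : ℝ) := by positivity
  have hTn : T < n * δ := by
    rw [← div_lt_iff₀ hδ]
    exact (Nat.le_ceil _).trans_lt (by simp [n])
  refine ⟨n, fun ω t ht => ?_⟩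
  have hstep : t / n < δ := by
    rw [div_lt_iff₀ hn, mul_comm]
    exact ht.2.trans_lt hTn
  set p : ℕ → ℝ := fun i => i * (t / n)
  have hp0 : p 0 = 0 := by simp [p]
  have hpn : p n = t := by simp [p]; field_simp
  calc ‖γ t ω - γ 0 ω‖ = dist (γ (p 0) ω) (γ (p n) ω) := by
        rw [hp0, hpn, dist_comm, dist_eq_norm]
    _ ≤ ∑ i ∈ Finset.range n, dist (γ (p i) ω) (γ (p (i + 1)) ω) :=
        dist_le_range_sum_dist (fun i => γ (p i) ω) n
    _ ≤ ∑ _i ∈ Finset.range n, (1 : ℝ) := by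
        refine Finset.sum_le_sum fun i hi => ?_
        have hi : (i : ℝ) + 1 ≤ n := by exact_mod_cast Finset.mem_range.1 hi
        have ht0 : 0 ≤ t / n := div_nonneg ht.1 hn.le
        rw [dist_comm, dist_eq_norm]
        refine (h ω (p i) (p (i + 1)) (by positivity) ?_ ?_ ?_).le
        · simp only [p]; push_cast; nlinarith
        · calc p (i + 1) ≤ p n := by simp only [p]; push_cast; nlinarith
            _ ≤ max T 1 := hpn ▸ ht.2.trans (le_max_left _ _)
        · simp only [p]; push_cast; linarith
    _ = n := by simp

end UnifLocAbsCont

theorem NonAnticipating.factorsThrough {Ω F : Type*} {m : ℕ} {X : ℝ → Ω → Fin m}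
    {γ : ℝ → Ω → F} (hγ : NonAnticipating X γ) : (γ 0).FactorsThrough (X 0) :=
  fun ω₁ ω₂ h => hγ 0 le_rfl ω₁ ω₂ (fun _ hr hr' => le_antisymm hr' hr ▸ h) 0 le_rfl le_rfl

theorem UnifLocAbsCont.exists_norm_le {Ω F : Type*} [NormedAddCommGroup F] {m : ℕ}
    {X : ℝ → Ω → Fin m} {γ : ℝ → Ω → F} (hAC : UnifLocAbsCont γ) (hNA : NonAnticipating X γ)
    (T : ℝ) : ∃ M, ∀ ω, ∀ t ∈ Icc 0 T, ‖γ t ω‖ ≤ M := by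
  obtain ⟨M, hM⟩ := hAC.exists_norm_sub_start_le T
  obtain ⟨M₀, hM₀⟩ := isBounded_iff_forall_norm_le.1
    (finite_range (Function.extend (X 0) (γ 0) 0)).isBounded
  refine ⟨M + M₀, fun ω t ht => ?_⟩
  have hstart : ‖γ 0 ω‖ ≤ M₀ := hM₀ _ ⟨X 0 ω, hNA.factorsThrough.extend_apply 0 ω⟩
  calc ‖γ t ω‖ ≤ ‖γ t ω - γ 0 ω‖ + ‖γ 0 ω‖ := norm_le_norm_sub_add _ _
    _ ≤ M + M₀ := add_le_add (hM ω t ht) hstart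

theorem LipschitzOnWith.abs_apply_sub_apply_le {α ι : Type*} [PseudoMetricSpace α] [Fintype ι]
    [DecidableEq ι] {f : α → ι → ℝ} {s : Set α} {L : ℝ≥0} {M : ℝ} (hf : LipschitzOnWith L f s)
    (hM : ∀ p ∈ s, ‖f p‖ ≤ M) {p q : α} (hp : p ∈ s) (hq : q ∈ s) (k l : ι) :
    |f q l - f p k| ≤ L * dist p q + if k = l then 0 else 2 * M := by
  split_ifs with hkl
  · subst hkl
    rw [add_zero, ← Real.dist_eq, dist_comm p]
    exact (dist_le_pi_dist (f q) (f p) k).trans (hf.dist_le_mul q hq p hp)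
  · calc |f q l - f p k| ≤ |f q l| + |f p k| := abs_sub _ _
      _ ≤ M + M := add_le_add ((norm_le_pi_norm (f q) l).trans (hM q hq))
          ((norm_le_pi_norm (f p) k).trans (hM p hp))
      _ ≤ L * dist p q + 2 * M := by
          linarith [mul_nonneg L.coe_nonneg (dist_nonneg (x := p) (y := q))]

theorem LocallyLipschitz.exists_abs_apply_sub_apply_le {E ι : Type*} [NormedAddCommGroup E]
    [ProperSpace E] [Fintype ι] [DecidableEq ι] {u : ℝ → E → ι → ℝ}
    (hu : LocallyLipschitz fun p : ℝ × E => u p.1 p.2) (T M : ℝ) :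
    ∃ L B : ℝ≥0, (∀ t ∈ Icc 0 T, ∀ x ∈ Metric.closedBall (0 : E) M, ‖u t x‖ ≤ B) ∧
      ∀ s ∈ Icc 0 T, ∀ t ∈ Icc 0 T, s ≤ t → ∀ x ∈ Metric.closedBall (0 : E) M,
        ∀ y ∈ Metric.closedBall (0 : E) M, ∀ k l,
          |u t y l - u s x k| ≤ L * ((t - s) + ‖y - x‖) + if k = l then 0 else 2 * (B : ℝ) := by
  have hK : IsCompact (Icc 0 T ×ˢ Metric.closedBall (0 : E) M) :=
    isCompact_Icc.prod (isCompact_closedBall _ _)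
  obtain ⟨L, hL⟩ := hu.locallyLipschitzOn.exists_lipschitzOnWith_of_compact hK
  obtain ⟨B, hB⟩ := hK.exists_bound_of_continuousOn hu.continuous.continuousOn
  have hB' : ∀ p ∈ Icc 0 T ×ˢ Metric.closedBall (0 : E) M, ‖u p.1 p.2‖ ≤ B.toNNReal :=
    fun p hp => (hB p hp).trans (Real.le_coe_toNNReal B)
  refine ⟨L, B.toNNReal, fun t ht x hx => hB' (t, x) ⟨ht, hx⟩,
    fun s hs t ht hst x hx y hy k l => ?_⟩
  have hdist : dist (s, x) (t, y) ≤ (t - s) + ‖y - x‖ := by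
    rw [Prod.dist_eq, Real.dist_eq, abs_sub_comm, abs_of_nonneg (sub_nonneg.2 hst), dist_comm,
      dist_eq_norm]
    exact max_le_add_of_nonneg (sub_nonneg.2 hst) (norm_nonneg _)
  exact (hL.abs_apply_sub_apply_le hB' (p := (s, x)) (q := (t, y)) ⟨hs, hx⟩ ⟨ht, hy⟩ k l).trans
    (add_le_add_left (mul_le_mul_of_nonneg_left hdist L.coe_nonneg) _)

section Expectation

variable {Ω ι : Type*} [MeasurableSpace Ω] {μ : Measure Ω} [Fintype ι]

theorem sum_norm_integral_sub_le {E : Type*} [NormedAddCommGroup E]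
    [NormedSpace ℝ E] {f g : ι → Ω → E} (hf : ∀ j, Integrable (f j) μ)
    (hg : ∀ j, Integrable (g j) μ) :
    ∑ j, ‖∫ ω, f j ω ∂μ - ∫ ω, g j ω ∂μ‖ ≤ ∫ ω, ∑ j, ‖f j ω - g j ω‖ ∂μ := by
  rw [integral_finsetSum (f := fun j ω => ‖f j ω - g j ω‖) _
    fun j _ => ((hf j).sub (hg j)).norm]
  refine Finset.sum_le_sum fun j _ => ?_
  rw [← integral_sub (hf j) (hg j)]
  exact norm_integral_le_integral_norm _

theorem integrable_apply_of_norm_le [IsFiniteMeasure μ] [MeasurableSpace ι]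
    [MeasurableSingletonClass ι] {E : Type*} [TopologicalSpace E] [MeasurableSpace E]
    [OpensMeasurableSpace E] {u : E → ι → ℝ} (hu : Continuous u) {Y : Ω → E} (hY : Measurable Y)
    {Z : Ω → ι} (hZ : Measurable Z) {B : ℝ} (hB : ∀ ω, ‖u (Y ω)‖ ≤ B) :
    Integrable (fun ω => u (Y ω) (Z ω)) μ := by
  have hmeas : Measurable fun q : E × ι => u q.1 q.2 :=
    measurable_from_prod_countable_left fun k => ((continuous_apply k).comp hu).measurable
  exact Integrable.of_bound (hmeas.comp (hY.prodMk hZ)).aestronglyMeasurable B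
    (ae_of_all _ fun ω => (norm_le_pi_norm _ _).trans (hB ω))

theorem sum_norm_integral_sub_le_add [IsProbabilityMeasure μ] {E : Type*}
    [NormedAddCommGroup E] [NormedSpace ℝ E] {f g : ι → Ω → E} (hf : ∀ j, Integrable (f j) μ)
    (hg : ∀ j, Integrable (g j) μ) {a : ι → ℝ} {h : ι → Ω → ℝ} {S : ι → Set Ω}
    (hS : ∀ j, MeasurableSet (S j)) {G B : ℝ}
    (hfg : ∀ j ω, ‖f j ω - g j ω‖ ≤ a j + h j ω + (S j).indicator (fun _ => B) ω)
    (hh : ∀ ω, ∑ j, h j ω ≤ G) :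
    ∑ j, ‖∫ ω, f j ω ∂μ - ∫ ω, g j ω ∂μ‖ ≤ ∑ j, a j + G + B * ∑ j, μ.real (S j) := by
  have hind : ∀ j ∈ Finset.univ, Integrable ((S j).indicator fun _ => B) μ :=
    fun j _ => (integrable_const B).indicator (hS j)
  have hpt : ∀ ω, ∑ j, ‖f j ω - g j ω‖ ≤ ∑ j, a j + G + ∑ j, (S j).indicator (fun _ => B) ω :=
    fun ω => calc ∑ j, ‖f j ω - g j ω‖
        ≤ ∑ j, (a j + h j ω + (S j).indicator (fun _ => B) ω) :=
          Finset.sum_le_sum fun j _ => hfg j ω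
      _ = ∑ j, a j + ∑ j, h j ω + ∑ j, (S j).indicator (fun _ => B) ω := by
          rw [Finset.sum_add_distrib, Finset.sum_add_distrib]
      _ ≤ ∑ j, a j + G + ∑ j, (S j).indicator (fun _ => B) ω := by gcongr; exact hh ω
  calc ∑ j, ‖∫ ω, f j ω ∂μ - ∫ ω, g j ω ∂μ‖ ≤ ∫ ω, ∑ j, ‖f j ω - g j ω‖ ∂μ :=
        sum_norm_integral_sub_le hf hg
    _ ≤ ∫ ω, (∑ j, a j + G + ∑ j, (S j).indicator (fun _ => B) ω) ∂μ :=
        integral_mono (integrable_finsetSum _ fun j _ => ((hf j).sub (hg j)).norm)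
          ((integrable_const _).add (integrable_finsetSum _ hind)) hpt
    _ = ∑ j, a j + G + B * ∑ j, μ.real (S j) := by
        rw [integral_add (integrable_const _) (integrable_finsetSum _ hind),
          integral_finsetSum _ hind, Finset.mul_sum]
        simp [integral_indicator_const _ (hS _), mul_comm]

end Expectation

section Window

variable {Ω E ι : Type*} [MeasurableSpace Ω] {μ : Measure Ω} [IsProbabilityMeasure μ]
  [NormedAddCommGroup E] [ProperSpace E] [MeasurableSpace E] [OpensMeasurableSpace E]
  [Fintype ι] [DecidableEq ι] [MeasurableSpace ι] [MeasurableSingletonClass ι]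
  {u : ℝ → E → ι → ℝ} {γ : ℝ → Ω → E} {X : ℝ → Ω → ι}

theorem exists_sum_norm_integral_sub_le (hu : LocallyLipschitz fun p : ℝ × E => u p.1 p.2)
    (hγm : ∀ t, Measurable (γ t)) (hX : ∀ t, Measurable (X t)) {T M : ℝ}
    (hM : ∀ ω, ∀ t ∈ Icc 0 T, ‖γ t ω‖ ≤ M) {C : ℝ≥0}
    (hC : ∀ s t, 0 ≤ s → s ≤ t → t ≤ T → μ.real {ω | X s ω ≠ X t ω} ≤ C * (t - s)) :
    ∃ K L : ℝ≥0, ∀ n (c d : Fin n → ℝ), (∀ j, c j ∈ Icc 0 T ∧ d j ∈ Icc 0 T ∧ c j ≤ d j) →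
      ∀ G, (∀ ω, ∑ j, ‖γ (d j) ω - γ (c j) ω‖ ≤ G) →
        ∑ j, ‖∫ ω, u (d j) (γ (d j) ω) (X (d j) ω) ∂μ - ∫ ω, u (c j) (γ (c j) ω) (X (c j) ω) ∂μ‖
          ≤ K * ∑ j, (d j - c j) + L * G := by
  have hball : ∀ ω, ∀ t ∈ Icc 0 T, γ t ω ∈ Metric.closedBall 0 M :=
    fun ω t ht => mem_closedBall_zero_iff.2 (hM ω t ht)
  obtain ⟨L, B, hB, hLip⟩ := hu.exists_abs_apply_sub_apply_le T M
  have hint : ∀ t ∈ Icc 0 T, Integrable (fun ω => u t (γ t ω) (X t ω)) μ := fun t ht =>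
    integrable_apply_of_norm_le (hu.continuous.comp (Continuous.prodMk_right t)) (hγm t) (hX t)
      fun ω => hB t ht _ (hball ω t ht)
  refine ⟨L + 2 * B * C, L, fun n c d hcd G hG => ?_⟩
  have hF : ∀ j ω, ‖u (d j) (γ (d j) ω) (X (d j) ω) - u (c j) (γ (c j) ω) (X (c j) ω)‖
      ≤ L * (d j - c j) + L * ‖γ (d j) ω - γ (c j) ω‖
        + {ω | X (c j) ω ≠ X (d j) ω}.indicator (fun _ => 2 * (B : ℝ)) ω := fun j ω => by
    simpa [indicator_apply, ite_not, mul_add] using hLip _ (hcd j).1 _ (hcd j).2.1 (hcd j).2.2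
      _ (hball ω _ (hcd j).1) _ (hball ω _ (hcd j).2.1) (X (c j) ω) (X (d j) ω)
  have hγsum : ∀ ω, ∑ j, L * ‖γ (d j) ω - γ (c j) ω‖ ≤ L * G := fun ω => by
    rw [← Finset.mul_sum]
    exact mul_le_mul_of_nonneg_left (hG ω) L.coe_nonneg
  have hjumps : ∑ j, μ.real {ω | X (c j) ω ≠ X (d j) ω} ≤ C * ∑ j, (d j - c j) := by
    rw [Finset.mul_sum]
    exact Finset.sum_le_sum fun j _ => hC _ _ (hcd j).1.1 (hcd j).2.2 (hcd j).2.1.2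
  calc ∑ j, ‖∫ ω, u (d j) (γ (d j) ω) (X (d j) ω) ∂μ - ∫ ω, u (c j) (γ (c j) ω) (X (c j) ω) ∂μ‖
      ≤ ∑ j, L * (d j - c j) + L * G + 2 * B * ∑ j, μ.real {ω | X (c j) ω ≠ X (d j) ω} :=
        sum_norm_integral_sub_le_add (fun j => hint _ (hcd j).2.1) (fun j => hint _ (hcd j).1)
          (fun j => (measurableSet_eq_fun (hX _) (hX _)).compl) hF hγsum
    _ ≤ (L + 2 * B * C : ℝ≥0) * ∑ j, (d j - c j) + L * G := by
        rw [← Finset.mul_sum]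
        push_cast
        nlinarith [mul_le_mul_of_nonneg_left hjumps (by positivity : (0 : ℝ) ≤ 2 * B)]

theorem locallyAbsContOn_integral_comp (hu : LocallyLipschitz fun p : ℝ × E => u p.1 p.2)
    (hγ : UnifLocAbsCont γ) (hγb : ∀ T, ∃ M, ∀ ω, ∀ t ∈ Icc 0 T, ‖γ t ω‖ ≤ M)
    (hγm : ∀ t, Measurable (γ t)) (hX : ∀ t, Measurable (X t))
    (hjump : ∀ T, ∃ C : ℝ≥0, ∀ s t, 0 ≤ s → s ≤ t → t ≤ T →
      μ.real {ω | X s ω ≠ X t ω} ≤ C * (t - s)) :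
    LocallyAbsContOn (fun t => ∫ ω, u t (γ t ω) (X t ω) ∂μ) (Ici 0) := by
  intro a b ha _ ε hε
  set T := max b 1
  obtain ⟨M, hM⟩ := hγb T
  obtain ⟨C, hC⟩ := hjump T
  obtain ⟨K, L, hKL⟩ := exists_sum_norm_integral_sub_le hu hγm hX hM hC
  set η := ε / (K + L + 1)
  have hη : 0 < η := by positivity
  obtain ⟨δ, hδ, hγδ⟩ := hγ T (lt_max_of_lt_right one_pos) η hη
  refine ⟨min δ η, lt_min hδ hη, fun n c d hcd hdisj hsum => ?_⟩
  have hcd' : ∀ j, c j ∈ Icc 0 T ∧ d j ∈ Icc 0 T ∧ c j ≤ d j := fun j =>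
    ⟨⟨ha.trans (hcd j).1.1, (hcd j).1.2.trans (le_max_left _ _)⟩,
      ⟨ha.trans (hcd j).2.1.1, (hcd j).2.1.2.trans (le_max_left _ _)⟩, (hcd j).2.2⟩
  have hγsum : ∀ ω, ∑ j, ‖γ (d j) ω - γ (c j) ω‖ ≤ η := fun ω =>
    (hγδ ω n c d (fun j => ⟨(hcd' j).1.1, (hcd j).2.2, (hcd' j).2.1.2⟩) hdisj
      (hsum.trans_le (min_le_left _ _))).le
  calc _ ≤ K * ∑ j, (d j - c j) + L * η := hKL n c d hcd' η hγsum
    _ ≤ (K + L) * η := by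
        nlinarith [mul_le_mul_of_nonneg_left (hsum.le.trans (min_le_right _ _)) K.coe_nonneg]
    _ < ε := by
        rw [mul_div_assoc', div_lt_iff₀ (by positivity)]
        nlinarith

end Window

theorem stmt10_general {N m : ℕ} {Ω : Type*} [m0 : MeasurableSpace Ω]
    (B : Matrix (Fin m) (Fin m) ℝ)
    (P : Fin m → Measure Ω) (hP : ∀ i, IsProbabilityMeasure (P i))
    (X : ℝ → Ω → Fin m) (hX : ∀ t, Measurable (X t))
    (hmarkov : ∀ (i : Fin m) (s t : ℝ), 0 ≤ s → s ≤ t → ∀ k j : Fin m,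
      (P i {ω | X s ω = k ∧ X t ω = j}).toReal
        = (P i {ω | X s ω = k}).toReal * NormedSpace.exp (-((t - s) • B)) k j)
    (u : ℝ → EuclideanSpace ℝ (Fin N) → Fin m → ℝ)
    (hu : LocallyLipschitz (fun p : ℝ × EuclideanSpace ℝ (Fin N) => u p.1 p.2))
    (γ : ℝ → Ω → EuclideanSpace ℝ (Fin N))
    (hAC : UnifLocAbsCont γ)
    (hNA : NonAnticipating X γ)
    (hmeas : Measurable fun p : ℝ × Ω => γ p.1 p.2) :
    ∀ i : Fin m,
      LocallyAbsContOn (fun t => ∫ ω, u t (γ t ω) (X t ω) ∂(P i)) (Set.Ici (0 : ℝ)) := by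
  intro i
  have hjump := exists_measureReal_ne_le_mul (μ := P i) B hX
    fun s t hs hst k => hmarkov i s t hs hst k k
  exact locallyAbsContOn_integral_comp hu hAC (hAC.exists_norm_le hNA)
    (fun t => hmeas.comp (measurable_const.prodMk measurable_id)) hX hjump

/-- if `u : ℝ₊ × ℝ^N → ℝ^m` is locally Lipschitz and `γ` is an admissible
random curve for the Markov chain `X` with generator `−B` (law `P i` started at `i`),
then `t ↦ E_i[u_{ω(t)}(t, γ(t,ω))]` is locally absolutely continuous on `ℝ₊`. -/
theorem stmt10 {N m : ℕ} {Ω : Type*} [m0 : MeasurableSpace Ω]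
    (B : Matrix (Fin m) (Fin m) ℝ)
    (hoff : ∀ i j, i ≠ j → B i j ≤ 0)
    (hrow : ∀ i, ∑ j, B i j = 0)
    (P : Fin m → Measure Ω) (hP : ∀ i, IsProbabilityMeasure (P i))
    (X : ℝ → Ω → Fin m) (hX : ∀ t, Measurable (X t))
    (hstart : ∀ i, P i {ω | X 0 ω = i} = 1)
    (hmarkov : ∀ (i : Fin m) (s t : ℝ), 0 ≤ s → s ≤ t → ∀ k j : Fin m,
      (P i {ω | X s ω = k ∧ X t ω = j}).toReal
        = (P i {ω | X s ω = k}).toReal * NormedSpace.exp (-((t - s) • B)) k j)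
    (u : ℝ → EuclideanSpace ℝ (Fin N) → Fin m → ℝ)
    (hu : LocallyLipschitz (fun p : ℝ × EuclideanSpace ℝ (Fin N) => u p.1 p.2))
    (γ : ℝ → Ω → EuclideanSpace ℝ (Fin N))
    (hAC : UnifLocAbsCont γ)
    (hNA : NonAnticipating X γ)
    (hmeas : Measurable fun p : ℝ × Ω => γ p.1 p.2) :
    ∀ i : Fin m,
      LocallyAbsContOn (fun t => ∫ ω, u t (γ t ω) (X t ω) ∂(P i)) (Set.Ici (0 : ℝ)) :=
  stmt10_general (m0 := m0) B P hP X hX hmarkov u hu γ hAC hNA hmeas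
end
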